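/- arXiv:2204.01404 — 2 statements merged into one kernel-verified Lean document; each statement's English description precedes it below -/
import Mathlib

section
/- For every finite oriented graph D, the maximum over all probability distributions δ on the vertices of D of the sum over directed edges (u,v) of δ(u)δ(v) equals (k-1)/(2k), where k is the largest integer such that D contains a subgraph that is an orientation of the complete graph K_k. -/
open Finset

section Aux

variable {V : Type*} [Fintype V] [DecidableEq V]
variable (E : V → V → Prop) [DecidableRel E]

/-- Bilinear form associated to the edge relation. -/
private def FF (x y : V → ℝ) : ℝ := ∑ u, ∑ v, if E u v then x u * y v else 0

private lemma FF_addl (x x' y : V → ℝ) :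
    FF E (fun w => x w + x' w) y = FF E x y + FF E x' y := by
  unfold FF
  rw [← Finset.sum_add_distrib]
  refine Finset.sum_congr rfl fun u _ => ?_
  rw [← Finset.sum_add_distrib]
  refine Finset.sum_congr rfl fun v _ => ?_
  split_ifs <;> ring

private lemma FF_addr (x y y' : V → ℝ) :
    FF E x (fun w => y w + y' w) = FF E x y + FF E x y' := by
  unfold FF
  rw [← Finset.sum_add_distrib]
  refine Finset.sum_congr rfl fun u _ => ?_
  rw [← Finset.sum_add_distrib]
  refine Finset.sum_congr rfl fun v _ => ?_
  split_ifs <;> ring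

private lemma FF_smull (c : ℝ) (x y : V → ℝ) :
    FF E (fun w => c * x w) y = c * FF E x y := by
  unfold FF
  rw [Finset.mul_sum]
  refine Finset.sum_congr rfl fun u _ => ?_
  rw [Finset.mul_sum]
  refine Finset.sum_congr rfl fun v _ => ?_
  split_ifs <;> ring

private lemma FF_smulr (c : ℝ) (x y : V → ℝ) :
    FF E x (fun w => c * y w) = c * FF E x y := by
  unfold FF
  rw [Finset.mul_sum]
  refine Finset.sum_congr rfl fun u _ => ?_
  rw [Finset.mul_sum]
  refine Finset.sum_congr rfl fun v _ => ?_
  split_ifs <;> ring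

private lemma FF_indl (a : V) (y : V → ℝ) :
    FF E (fun w => if w = a then (1:ℝ) else 0) y = ∑ v, if E a v then y v else 0 := by
  unfold FF
  rw [Finset.sum_eq_single a]
  · refine Finset.sum_congr rfl fun v _ => ?_
    split_ifs <;> simp
  · intro u _ hu
    apply Finset.sum_eq_zero
    intro v _
    split_ifs <;> simp [hu]
  · simp

private lemma FF_indr (a : V) (x : V → ℝ) :
    FF E x (fun w => if w = a then (1:ℝ) else 0) = ∑ u, if E u a then x u else 0 := by
  unfold FF
  refine Finset.sum_congr rfl fun u _ => ?_
  rw [Finset.sum_eq_single a]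
  · split_ifs <;> simp
  · intro v _ hv
    split_ifs <;> simp [hv]
  · simp

/-- shifting mass from b to a. -/
private lemma FF_shift (hirr : ∀ v, ¬ E v v) (a b : V) (hab : a ≠ b)
    (hEab : ¬ E a b) (hEba : ¬ E b a) (δ : V → ℝ) :
    FF E (fun w => δ w + (δ b * (if w = a then 1 else 0) +
      (-(δ b)) * (if w = b then 1 else 0))) (fun w => δ w + (δ b * (if w = a then 1 else 0) +
      (-(δ b)) * (if w = b then 1 else 0)))
    = FF E δ δ + δ b * (((∑ v, if E a v then δ v else 0) + ∑ u, if E u a then δ u else 0)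
        - ((∑ v, if E b v then δ v else 0) + ∑ u, if E u b then δ u else 0)) := by
  set inda : V → ℝ := fun w => if w = a then 1 else 0 with hinda
  set indb : V → ℝ := fun w => if w = b then 1 else 0 with hindb
  set c := δ b with hc
  set y : V → ℝ := fun w => δ w + (c * inda w + (-c) * indb w) with hy
  have expandr : ∀ x : V → ℝ, FF E x y =
      FF E x δ + (c * FF E x inda + (-c) * FF E x indb) := by
    intro x
    have h1 : FF E x y = FF E x δ + FF E x (fun w => c * inda w + (-c) * indb w) :=
      FF_addr E x δ _
    have h2 : FF E x (fun w => c * inda w + (-c) * indb w)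
        = FF E x (fun w => c * inda w) + FF E x (fun w => (-c) * indb w) :=
      FF_addr E x _ _
    rw [h1, h2, FF_smulr, FF_smulr]
  have h1 : FF E y y = FF E δ y + FF E (fun w => c * inda w + (-c) * indb w) y :=
    FF_addl E δ _ y
  have h2 : FF E (fun w => c * inda w + (-c) * indb w) y
      = FF E (fun w => c * inda w) y + FF E (fun w => (-c) * indb w) y :=
    FF_addl E _ _ y
  rw [h1, h2, FF_smull, FF_smull, expandr δ, expandr inda, expandr indb]
  have e1 : FF E δ inda = ∑ u, if E u a then δ u else 0 := FF_indr E a δ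
  have e2 : FF E δ indb = ∑ u, if E u b then δ u else 0 := FF_indr E b δ
  have e3 : FF E inda δ = ∑ v, if E a v then δ v else 0 := FF_indl E a δ
  have e4 : FF E indb δ = ∑ v, if E b v then δ v else 0 := FF_indl E b δ
  have e5 : FF E inda inda = 0 := by
    rw [FF_indl]
    apply Finset.sum_eq_zero; intro v _
    simp only [hinda, hindb]
    split_ifs with hp hq
    · exact absurd (hq ▸ hp) (hirr v)
    · rfl
    · rfl
  have e6 : FF E inda indb = 0 := by
    rw [FF_indl]
    apply Finset.sum_eq_zero; intro v _
    simp only [hinda, hindb]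
    split_ifs with hp hq
    · exact absurd (hq ▸ hp) hEab
    · rfl
    · rfl
  have e7 : FF E indb inda = 0 := by
    rw [FF_indl]
    apply Finset.sum_eq_zero; intro v _
    simp only [hinda, hindb]
    split_ifs with hp hq
    · exact absurd (hq ▸ hp) hEba
    · rfl
    · rfl
  have e8 : FF E indb indb = 0 := by
    rw [FF_indl]
    apply Finset.sum_eq_zero; intro v _
    simp only [hinda, hindb]
    split_ifs with hp hq
    · exact absurd (hq ▸ hp) (hirr v)
    · rfl
    · rfl
  rw [e1, e2, e3, e4, e5, e6, e7, e8]
  ring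

end Aux

section Main

variable {V : Type*} [Fintype V] [DecidableEq V]
variable (E : V → V → Prop) [DecidableRel E]

/-- The key upper bound, by induction on the size of the support. -/
private lemma FF_upper (hirr : ∀ v, ¬ E v v) (hanti : ∀ u v, E u v → ¬ E v u)
    (k : ℕ) (hk1 : 1 ≤ k)
    (hcl : ∀ S : Finset V, (∀ a ∈ S, ∀ b ∈ S, a ≠ b → E a b ∨ E b a) → S.card ≤ k) :
    ∀ n : ℕ, ∀ δ : V → ℝ, (∀ v, 0 ≤ δ v) → (∑ v, δ v) = 1 →
      (univ.filter fun v => δ v ≠ 0).card ≤ n →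
      FF E δ δ ≤ ((k : ℝ) - 1) / (2 * k) := by
  intro n
  induction n with
  | zero =>
    intro δ hpos hsum hcard
    exfalso
    have hz : ∀ v : V, δ v = 0 := by
      intro v
      by_contra h
      have : v ∈ univ.filter fun v => δ v ≠ 0 := by simp [h]
      have := Finset.card_pos.mpr ⟨v, this⟩
      omega
    rw [Finset.sum_congr rfl fun v _ => hz v] at hsum
    simp at hsum
  | succ n ih =>
    intro δ hpos hsum hcard
    set S := univ.filter fun v => δ v ≠ 0 with hS
    have hkR : (0:ℝ) < k := by exact_mod_cast hk1
    by_cases hclS : ∀ a ∈ S, ∀ b ∈ S, a ≠ b → E a b ∨ E b a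
    · -- support is a clique: direct bound
      have hm : S.card ≤ k := hcl S hclS
      have hSsum : ∑ v ∈ S, δ v = 1 := by
        rw [← hsum]
        apply Finset.sum_subset (Finset.subset_univ S)
        intro v _ hv
        by_contra h
        exact hv (by simp [hS, h])
      have hsq : (1:ℝ) ≤ (k:ℝ) * ∑ v, (δ v)^2 := by
        have h1 : (1:ℝ) ≤ (S.card : ℝ) * ∑ v ∈ S, (δ v)^2 := by
          have := sq_sum_le_card_mul_sum_sq (s := S) (f := δ)
          rw [hSsum] at this
          simpa using this
        have h2 : ∑ v ∈ S, (δ v)^2 ≤ ∑ v, (δ v)^2 :=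
          Finset.sum_le_sum_of_subset_of_nonneg (Finset.subset_univ S)
            (fun v _ _ => sq_nonneg _)
        calc (1:ℝ) ≤ (S.card : ℝ) * ∑ v ∈ S, (δ v)^2 := h1
          _ ≤ (k:ℝ) * ∑ v, (δ v)^2 := by
              apply mul_le_mul (by exact_mod_cast hm) h2
                (Finset.sum_nonneg fun v _ => sq_nonneg _) (le_of_lt hkR)
      -- 2 * FF ≤ 1 - ∑ δ²
      have hdouble : 2 * FF E δ δ ≤ 1 - ∑ v, (δ v)^2 := by
        have hcomm : FF E δ δ = ∑ u, ∑ v, if E v u then δ u * δ v else 0 := by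
          unfold FF
          rw [Finset.sum_comm]
          refine Finset.sum_congr rfl fun u _ => ?_
          refine Finset.sum_congr rfl fun v _ => ?_
          split_ifs <;> ring
        have key : FF E δ δ + FF E δ δ ≤ ∑ u, ∑ v, (δ u * δ v - if u = v then δ u * δ v else 0) := by
          nth_rewrite 2 [hcomm]
          unfold FF
          rw [← Finset.sum_add_distrib]
          apply Finset.sum_le_sum
          intro u _
          rw [← Finset.sum_add_distrib]
          apply Finset.sum_le_sum
          intro v _
          have hnn : 0 ≤ δ u * δ v := mul_nonneg (hpos u) (hpos v)
          by_cases huv : u = v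
          · subst huv
            simp [hirr u]
          · split_ifs with h1 h2 h3 <;> simp [huv] <;> first
              | (exact absurd h2 (hanti _ _ h1)) | linarith
        have hrhs : ∑ u, ∑ v, (δ u * δ v - if u = v then δ u * δ v else 0)
            = 1 - ∑ v, (δ v)^2 := by
          have : ∀ u : V, ∑ v, (δ u * δ v - if u = v then δ u * δ v else 0)
              = δ u - (δ u)^2 := by
            intro u
            rw [Finset.sum_sub_distrib, ← Finset.mul_sum, hsum]
            have : ∑ v, (if u = v then δ u * δ v else 0) = δ u * δ u := by
              rw [Finset.sum_ite_eq]
              simp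
            rw [this]
            ring
          rw [Finset.sum_congr rfl fun u _ => this u, Finset.sum_sub_distrib, hsum]
        linarith [key, hrhs.symm ▸ key]
      -- combine
      have h1k : 1 / (k:ℝ) ≤ ∑ v, (δ v)^2 := by
        rw [div_le_iff₀ hkR]
        linarith [hsq]
      have : FF E δ δ ≤ (1 - 1/(k:ℝ)) / 2 := by linarith
      calc FF E δ δ ≤ (1 - 1/(k:ℝ)) / 2 := this
        _ = ((k:ℝ) - 1) / (2 * k) := by
            have hkne : (k:ℝ) ≠ 0 := ne_of_gt hkR
            field_simp
            try ring
            try exact Or.inl trivial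
    · -- support is not a clique: shift mass and induct
      push_neg at hclS
      obtain ⟨a, ha, b, hb, hab, hEab, hEba⟩ := hclS
      have hda : δ a ≠ 0 := by simpa [hS] using ha
      have hdb : δ b ≠ 0 := by simpa [hS] using hb
      -- N-values
      set N : V → ℝ := fun w => (∑ v, if E w v then δ v else 0) + ∑ u, if E u w then δ u else 0
        with hN
      -- wlog setup: a function building the new distribution shifting mass from q to p
      have main : ∀ p q : V, p ≠ q → ¬ E p q → ¬ E q p → δ p ≠ 0 → δ q ≠ 0 →
          N q ≤ N p → FF E δ δ ≤ ((k : ℝ) - 1) / (2 * k) := by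
        intro p q hpq hEpq hEqp hdp hdq hle
        set δ' : V → ℝ := fun w => δ w + (δ q * (if w = p then 1 else 0) +
          (-(δ q)) * (if w = q then 1 else 0)) with hδ'
        have hval : ∀ w, δ' w = if w = q then 0 else if w = p then δ p + δ q else δ w := by
          intro w
          simp only [hδ']
          split_ifs <;> simp_all
        have hpos' : ∀ v, 0 ≤ δ' v := by
          intro v
          rw [hval]
          split_ifs
          · exact le_refl 0
          · exact add_nonneg (hpos p) (hpos q)
          · exact hpos v
        have hsum' : ∑ v, δ' v = 1 := by
          simp only [hδ']
          rw [Finset.sum_add_distrib, Finset.sum_add_distrib, hsum,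
            ← Finset.mul_sum, ← Finset.mul_sum]
          rw [Finset.sum_ite_eq' univ p (fun _ => (1:ℝ)),
            Finset.sum_ite_eq' univ q (fun _ => (1:ℝ))]
          simp
        have hsupp : (univ.filter fun v => δ' v ≠ 0) ⊆ S.erase q := by
          intro v hv
          simp only [Finset.mem_filter, Finset.mem_univ, true_and] at hv
          rw [hval] at hv
          rw [Finset.mem_erase]
          split_ifs at hv with h1 h2
          · exact absurd rfl hv
          · exact ⟨h1, by simp [hS, h2, hdp]⟩
          · exact ⟨h1, by simp [hS, hv]⟩
        have hcard' : (univ.filter fun v => δ' v ≠ 0).card ≤ n := by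
          have hqS : q ∈ S := by simp [hS, hdq]
          have := Finset.card_le_card hsupp
          have h2 : (S.erase q).card = S.card - 1 := Finset.card_erase_of_mem hqS
          have h3 : 1 ≤ S.card := Finset.card_pos.mpr ⟨q, hqS⟩
          omega
        have hshift : FF E δ' δ' = FF E δ δ + δ q * (N p - N q) :=
          FF_shift E hirr p q hpq hEpq hEqp δ
        have hmono : FF E δ δ ≤ FF E δ' δ' := by
          rw [hshift]
          have : 0 ≤ δ q * (N p - N q) :=
            mul_nonneg (hpos q) (by linarith)
          linarith
        calc FF E δ δ ≤ FF E δ' δ' := hmono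
          _ ≤ ((k : ℝ) - 1) / (2 * k) := ih δ' hpos' hsum' hcard'
      rcases le_total (N b) (N a) with h | h
      · exact main a b hab hEab hEba hda hdb h
      · exact main b a (Ne.symm hab) hEba hEab hdb hda h

end Main

/-- For every finite oriented graph `D` (irreflexive, antisymmetric edge
relation `E`), the maximum over all probability distributions `δ` of
`∑_{(u,v) ∈ E} δ u * δ v` equals `(k-1)/(2k)`, where `k` is the largest size of a
subset of vertices any two of which are joined by an edge in some direction
(i.e. a subgraph that is an orientation of `K_k`). -/
theorem density_of_oriented_graph
    {V : Type*} [Fintype V] [Nonempty V] [DecidableEq V]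
    (E : V → V → Prop) [DecidableRel E]
    (hirr : ∀ v, ¬ E v v)
    (hanti : ∀ u v, E u v → ¬ E v u)
    (k : ℕ)
    (hk : IsGreatest {m : ℕ | ∃ S : Finset V, S.card = m ∧
            ∀ a ∈ S, ∀ b ∈ S, a ≠ b → E a b ∨ E b a} k) :
    IsGreatest {x : ℝ | ∃ δ : V → ℝ, (∀ v, 0 ≤ δ v) ∧ (∑ v, δ v) = 1 ∧
        x = ∑ u, ∑ v, if E u v then δ u * δ v else 0}
      ((k - 1) / (2 * k)) := by
  obtain ⟨⟨S, hScard, hSclique⟩, hub⟩ := hk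
  have hk1 : 1 ≤ k := by
    obtain ⟨v⟩ := ‹Nonempty V›
    have : (1 : ℕ) ∈ {m : ℕ | ∃ S : Finset V, S.card = m ∧
        ∀ a ∈ S, ∀ b ∈ S, a ≠ b → E a b ∨ E b a} := by
      refine ⟨{v}, Finset.card_singleton v, ?_⟩
      intro a ha b hb hab
      simp only [Finset.mem_singleton] at ha hb
      exact absurd (ha.trans hb.symm) hab
    exact hub this
  have hkR : (0:ℝ) < k := by exact_mod_cast hk1
  have hkne : (k:ℝ) ≠ 0 := ne_of_gt hkR
  constructor
  · -- membership: uniform distribution on S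
    set δ : V → ℝ := fun v => if v ∈ S then ((k:ℝ))⁻¹ else 0 with hδ
    refine ⟨δ, ?_, ?_, ?_⟩
    · intro v
      simp only [hδ]
      split_ifs
      · positivity
      · exact le_refl 0
    · simp only [hδ]
      rw [Finset.sum_ite_mem, Finset.univ_inter, Finset.sum_const, hScard]
      simp [hkne]
    · -- value computation
      have hreduce : ∑ u, ∑ v, (if E u v then δ u * δ v else 0)
          = ∑ u ∈ S, ∑ v ∈ S, (if E u v then ((k:ℝ))⁻¹ * ((k:ℝ))⁻¹ else 0) := by
        rw [← Finset.sum_subset (Finset.subset_univ S) (fun u _ hu => ?_)]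
        · refine Finset.sum_congr rfl fun u hu => ?_
          rw [← Finset.sum_subset (Finset.subset_univ S) (fun v _ hv => ?_)]
          · refine Finset.sum_congr rfl fun v hv => ?_
            simp only [hδ]
            rw [if_pos hu, if_pos hv]
          · simp only [hδ]
            rw [if_neg hv]
            split_ifs <;> ring
        · apply Finset.sum_eq_zero
          intro v _
          simp only [hδ]
          rw [if_neg hu]
          split_ifs <;> ring
      set c2 : ℝ := ∑ u ∈ S, ∑ v ∈ S, (if E u v then (1:ℝ) else 0) with hc2
      have hc2val : 2 * c2 = (k:ℝ) * ((k:ℝ) - 1) := by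
        have hswap : c2 = ∑ u ∈ S, ∑ v ∈ S, (if E v u then (1:ℝ) else 0) := by
          rw [hc2, Finset.sum_comm]
        have : 2 * c2 = ∑ u ∈ S, ∑ v ∈ S,
            ((if E u v then (1:ℝ) else 0) + (if E v u then 1 else 0)) := by
          rw [two_mul]
          nth_rewrite 2 [hswap]
          rw [← Finset.sum_add_distrib]
          refine Finset.sum_congr rfl fun u _ => ?_
          rw [← Finset.sum_add_distrib]
        rw [this]
        have hterm : ∀ u ∈ S, ∀ v ∈ S,
            ((if E u v then (1:ℝ) else 0) + (if E v u then 1 else 0))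
            = if u = v then 0 else 1 := by
          intro u hu v hv
          by_cases huv : u = v
          · subst huv
            simp [hirr u]
          · rcases hSclique u hu v hv huv with h | h
            · rw [if_pos h, if_neg (hanti _ _ h), if_neg huv]
              norm_num
            · rw [if_neg (hanti _ _ h), if_pos h, if_neg huv]
              norm_num
        rw [Finset.sum_congr rfl fun u hu => Finset.sum_congr rfl fun v hv =>
          hterm u hu v hv]
        have hrow : ∀ u ∈ S, ∑ v ∈ S, (if u = v then (0:ℝ) else 1) = (k:ℝ) - 1 := by
          intro u hu
          have : ∀ v, (if u = v then (0:ℝ) else 1) = 1 - (if u = v then 1 else 0) := by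
            intro v; split_ifs <;> ring
          rw [Finset.sum_congr rfl fun v _ => this v, Finset.sum_sub_distrib,
            Finset.sum_const, Finset.sum_ite_eq, if_pos hu, hScard]
          simp
        rw [Finset.sum_congr rfl hrow, Finset.sum_const, hScard]
        push_cast
        ring
      have hfact : ∑ u ∈ S, ∑ v ∈ S, (if E u v then ((k:ℝ))⁻¹ * ((k:ℝ))⁻¹ else 0)
          = ((k:ℝ))⁻¹ * ((k:ℝ))⁻¹ * c2 := by
        rw [hc2, Finset.mul_sum]
        refine Finset.sum_congr rfl fun u _ => ?_
        rw [Finset.mul_sum]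
        refine Finset.sum_congr rfl fun v _ => ?_
        split_ifs <;> ring
      rw [hreduce, hfact]
      have : c2 = (k:ℝ) * ((k:ℝ) - 1) / 2 := by linarith
      rw [this]
      field_simp
  · -- upper bound
    rintro x ⟨δ, hpos, hsum, rfl⟩
    have hcl : ∀ T : Finset V, (∀ a ∈ T, ∀ b ∈ T, a ≠ b → E a b ∨ E b a) → T.card ≤ k :=
      fun T hT => hub ⟨T, rfl, hT⟩
    have := FF_upper E hirr hanti k hk1 hcl
      (univ.filter fun v => δ v ≠ 0).card δ hpos hsum le_rfl
    simpa [FF] using this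
end

section
/- Let D be a finite oriented graph with density function δ (a probability distribution maximizing ∑_{(u,v)∈E(D)} δ(u)δ(v)). Then the subgraph of D induced by the support {v : δ(v) > 0} is an orientation of a blow-up of K_k for some k ≥ 1, and the sum of δ(u) over all copies u of each fixed vertex of K_k equals 1/k. -/
/-!
The objective is the quadratic form `δ ⬝ᵥ A *ᵥ δ` of the arc matrix `A` on the standard simplex.
At a maximiser the vector `(A + Aᵀ) *ᵥ δ`, whose entry at `x` is the `δ`-weight of the
neighbours of `x`, is constant on the support; hence the form is nonpositive along every
direction that stays inside the support. Moving the weights of two adjacent support vertices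
onto a common non-neighbour in the support is such a direction, along which the form is
positive. So non-adjacency is an equivalence relation on the support, and its classes are the
parts of the blow-up. A support vertex is adjacent to the whole support outside its own class,
so its degree is `1` minus the mass of its class; as degrees agree, all `k` masses are `1 / k`.
-/

open Finset Matrix Filter Topology

theorem nonpos_of_forall_mul_add_sq_mul_nonpos {a b ε : ℝ} (hε : 0 < ε)
    (h : ∀ t, 0 < t → t ≤ ε → t * a + t ^ 2 * b ≤ 0) : a ≤ 0 := by
  have hlim : Tendsto (fun t : ℝ => a + t * b) (𝓝[>] 0) (𝓝 a) := by
    have : Tendsto (fun t : ℝ => a + t * b) (𝓝 0) (𝓝 (a + 0 * b)) :=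
      (continuous_const.add (continuous_id.mul continuous_const)).tendsto 0
    simpa using this.mono_left nhdsWithin_le_nhds
  refine le_of_tendsto hlim ?_
  filter_upwards [Ioc_mem_nhdsGT hε] with t ⟨ht, htε⟩
  nlinarith [h t ht htε]

theorem Equivalence.exists_fin_coloring {α : Type*} [Finite α] {r : α → α → Prop}
    (hr : Equivalence r) :
    ∃ (k : ℕ) (c : α → Fin k), Function.Surjective c ∧ ∀ a b, c a = c b ↔ r a b := by
  let s : Setoid α := ⟨r, hr⟩
  let e := Finite.equivFin (Quotient s)
  exact ⟨_, e ∘ Quotient.mk s, e.surjective.comp Quotient.mk_surjective,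
    fun a b => e.apply_eq_iff_eq.trans Quotient.eq⟩

section StdSimplex

variable {V : Type*} [Fintype V]

theorem exists_pos_of_mem_stdSimplex {δ : V → ℝ} (hδ : δ ∈ stdSimplex ℝ V) : ∃ v, 0 < δ v := by
  by_contra! h
  have := hδ.2 ▸ sum_nonpos fun v _ => h v
  norm_num at this

theorem add_smul_single_sub_single_mem_stdSimplex [DecidableEq V] {δ : V → ℝ}
    (hδ : δ ∈ stdSimplex ℝ V) {t : ℝ} {u v : V} (ht : 0 ≤ t) (htv : t ≤ δ v) :
    δ + t • (Pi.single u 1 - Pi.single v 1) ∈ stdSimplex ℝ V := by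
  refine ⟨fun x => ?_, ?_⟩
  · have := hδ.1 x
    simp only [Pi.add_apply, Pi.smul_apply, Pi.sub_apply, Pi.single_apply, smul_eq_mul]
    split_ifs <;> subst_vars <;> linarith
  · simp [sum_add_distrib, ← mul_sum, hδ.2]

end StdSimplex

namespace Matrix

variable {V : Type*} [Fintype V]

theorem add_dotProduct_mulVec_add {R : Type*} [CommRing R] (A : Matrix V V R) (x y : V → R) :
    (x + y) ⬝ᵥ A *ᵥ (x + y) = x ⬝ᵥ A *ᵥ x + y ⬝ᵥ (A + Aᵀ) *ᵥ x + y ⬝ᵥ A *ᵥ y := by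
  rw [add_mulVec, dotProduct_add, dotProduct_transpose_mulVec]
  simp only [mulVec_add, dotProduct_add, add_dotProduct]
  ring

variable [DecidableEq V] {A : Matrix V V ℝ} {δ : V → ℝ}

theorem mulVec_apply_le_of_isMaxOn (hδ : δ ∈ stdSimplex ℝ V)
    (hmax : IsMaxOn (fun x => x ⬝ᵥ A *ᵥ x) (stdSimplex ℝ V) δ) (u : V) {v : V} (hv : 0 < δ v) :
    ((A + Aᵀ) *ᵥ δ) u ≤ ((A + Aᵀ) *ᵥ δ) v := by
  set p : V → ℝ := Pi.single u 1 - Pi.single v 1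
  refine sub_nonpos.1 <| nonpos_of_forall_mul_add_sq_mul_nonpos (b := p ⬝ᵥ A *ᵥ p) hv
    fun t ht htv => ?_
  have h : (δ + t • p) ⬝ᵥ A *ᵥ (δ + t • p) ≤ δ ⬝ᵥ A *ᵥ δ :=
    isMaxOn_iff.1 hmax _ (add_smul_single_sub_single_mem_stdSimplex hδ ht.le htv)
  have hp : p ⬝ᵥ (A + Aᵀ) *ᵥ δ = ((A + Aᵀ) *ᵥ δ) u - ((A + Aᵀ) *ᵥ δ) v := by
    simp only [p, sub_dotProduct, single_one_dotProduct]
  simp only [add_dotProduct_mulVec_add, mulVec_smul, smul_dotProduct, dotProduct_smul, hp,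
    smul_eq_mul] at h
  linarith

theorem mulVec_apply_eq_of_isMaxOn (hδ : δ ∈ stdSimplex ℝ V)
    (hmax : IsMaxOn (fun x => x ⬝ᵥ A *ᵥ x) (stdSimplex ℝ V) δ) {u v : V}
    (hu : 0 < δ u) (hv : 0 < δ v) : ((A + Aᵀ) *ᵥ δ) u = ((A + Aᵀ) *ᵥ δ) v :=
  (mulVec_apply_le_of_isMaxOn hδ hmax u hv).antisymm (mulVec_apply_le_of_isMaxOn hδ hmax v hu)

theorem sub_dotProduct_mulVec_sub_nonpos_of_isMaxOn (hδ : δ ∈ stdSimplex ℝ V)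
    (hmax : IsMaxOn (fun x => x ⬝ᵥ A *ᵥ x) (stdSimplex ℝ V) δ) {δ' : V → ℝ}
    (hδ' : δ' ∈ stdSimplex ℝ V) (hsupp : ∀ x, δ x = 0 → δ' x = 0) :
    (δ' - δ) ⬝ᵥ A *ᵥ (δ' - δ) ≤ 0 := by
  obtain ⟨v, hv⟩ := exists_pos_of_mem_stdSimplex hδ
  have hlin : (δ' - δ) ⬝ᵥ (A + Aᵀ) *ᵥ δ = 0 := by
    calc (δ' - δ) ⬝ᵥ (A + Aᵀ) *ᵥ δ = ∑ x, (δ' x - δ x) * ((A + Aᵀ) *ᵥ δ) v := by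
          refine sum_congr rfl fun x _ => ?_
          rcases (hδ.1 x).eq_or_lt with hx | hx
          · simp [hsupp x hx.symm, ← hx]
          · rw [Pi.sub_apply, mulVec_apply_eq_of_isMaxOn hδ hmax hx hv]
      _ = 0 := by rw [← sum_mul, sum_sub_distrib, hδ'.2, hδ.2, sub_self, zero_mul]
  have h := isMaxOn_iff.1 hmax δ' hδ'
  have hexp := add_dotProduct_mulVec_add A δ (δ' - δ)
  rw [add_sub_cancel] at hexp
  linarith

end Matrix

section OrientedGraph

variable {V : Type*} [Fintype V] {E : V → V → Prop} [DecidableRel E] {δ : V → ℝ}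

variable (E) in
def arcMatrix : Matrix V V ℝ := Matrix.of fun u v => if E u v then 1 else 0

theorem sum_sum_ite_eq_dotProduct_arcMatrix_mulVec (f : V → ℝ) :
    (∑ u, ∑ v, if E u v then f u * f v else 0) = f ⬝ᵥ arcMatrix E *ᵥ f := by
  simp only [dotProduct, mulVec, arcMatrix, of_apply, mul_sum]
  refine sum_congr rfl fun u _ => sum_congr rfl fun v _ => ?_
  split_ifs <;> ring

theorem arcMatrix_add_transpose_mulVec_apply (hanti : ∀ u v, E u v → ¬ E v u) (f : V → ℝ)
    (x : V) :
    ((arcMatrix E + (arcMatrix E)ᵀ) *ᵥ f) x = ∑ y, if E x y ∨ E y x then f y else 0 := by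
  simp only [mulVec, dotProduct, Matrix.add_apply, transpose_apply, arcMatrix, of_apply]
  refine sum_congr rfl fun y _ => ?_
  by_cases hxy : E x y
  · simp [hxy, hanti x y hxy]
  · by_cases hyx : E y x <;> simp [hxy, hyx]

theorem arcMatrix_add_transpose_mulVec_apply_add_sum_eq_one {κ : Type*} [DecidableEq κ]
    (hanti : ∀ u v, E u v → ¬ E v u) (hδ : δ ∈ stdSimplex ℝ V) {c : V → κ}
    (hc : ∀ u v, 0 < δ u → 0 < δ v → ((E u v ∨ E v u) ↔ c u ≠ c v)) {x : V} (hx : 0 < δ x) :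
    ((arcMatrix E + (arcMatrix E)ᵀ) *ᵥ δ) x +
      ∑ v ∈ univ.filter (fun v => 0 < δ v ∧ c v = c x), δ v = 1 := by
  rw [arcMatrix_add_transpose_mulVec_apply hanti, sum_filter, ← sum_add_distrib, ← hδ.2]
  refine sum_congr rfl fun y _ => ?_
  rcases (hδ.1 y).eq_or_lt with hy | hy
  · simp [← hy]
  · have := hc x y hx hy
    by_cases hcy : c y = c x <;> simp_all [eq_comm]

variable [DecidableEq V]

-- Moving the masses of `u` and `w` onto their common non-neighbour `v` gains the arc `uw`.
theorem not_adj_of_isMaxOn (hirr : ∀ v, ¬ E v v) (hδ : δ ∈ stdSimplex ℝ V)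
    (hmax : IsMaxOn (fun x => x ⬝ᵥ arcMatrix E *ᵥ x) (stdSimplex ℝ V) δ) {u v w : V}
    (hu : 0 < δ u) (hv : 0 < δ v) (hw : 0 < δ w)
    (huv : ¬ E u v) (hvu : ¬ E v u) (hvw : ¬ E v w) (hwv : ¬ E w v) : ¬ E u w := by
  intro huw
  have hu_ne_v : u ≠ v := by rintro rfl; exact hvw huw
  have hw_ne_v : w ≠ v := by rintro rfl; exact huv huw
  have hu_ne_w : u ≠ w := by rintro rfl; exact hirr u huw
  set p : V → ℝ := δ u • (Pi.single v 1 - Pi.single u 1) + δ w • (Pi.single v 1 - Pi.single w 1)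
  have hmem : δ + p ∈ stdSimplex ℝ V := by
    rw [← add_assoc]
    refine add_smul_single_sub_single_mem_stdSimplex
      (add_smul_single_sub_single_mem_stdSimplex hδ hu.le le_rfl) hw.le (le_of_eq ?_)
    simp [hw_ne_v, hu_ne_w.symm]
  have hsupp : ∀ x, δ x = 0 → (δ + p) x = 0 := by
    intro x hx
    have : x ≠ u ∧ x ≠ v ∧ x ≠ w := by
      refine ⟨?_, ?_, ?_⟩ <;> rintro rfl <;> linarith
    simp [p, hx, this]
  have h := sub_dotProduct_mulVec_sub_nonpos_of_isMaxOn hδ hmax hmem hsupp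
  rw [add_sub_cancel_left] at h
  simp [p, mulVec_add, mulVec_sub, mulVec_smul, dotProduct_add, add_dotProduct, sub_dotProduct,
    dotProduct_sub, smul_dotProduct, dotProduct_smul, arcMatrix, hirr, huv, hvu, hvw, hwv,
    huw] at h
  split_ifs at h <;> nlinarith [mul_pos hu hw]

theorem exists_support_coloring_of_isMaxOn (hirr : ∀ v, ¬ E v v) (hδ : δ ∈ stdSimplex ℝ V)
    (hmax : IsMaxOn (fun x => x ⬝ᵥ arcMatrix E *ᵥ x) (stdSimplex ℝ V) δ) :
    ∃ (k : ℕ) (c : V → Fin k), (∀ i, ∃ x, 0 < δ x ∧ c x = i) ∧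
      ∀ u v, 0 < δ u → 0 < δ v → ((E u v ∨ E v u) ↔ c u ≠ c v) := by
  have hequiv : Equivalence fun a b : {x // 0 < δ x} => ¬ E a b ∧ ¬ E b a := by
    refine ⟨fun a => ⟨hirr a, hirr a⟩, fun h => h.symm, fun {a b c} hab hbc => ⟨?_, ?_⟩⟩
    · exact not_adj_of_isMaxOn hirr hδ hmax a.2 b.2 c.2 hab.1 hab.2 hbc.1 hbc.2
    · exact not_adj_of_isMaxOn hirr hδ hmax c.2 b.2 a.2 hbc.2 hbc.1 hab.2 hab.1
  obtain ⟨k, c, hsurj, hc⟩ := hequiv.exists_fin_coloring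
  obtain ⟨v₀, hv₀⟩ := exists_pos_of_mem_stdSimplex hδ
  refine ⟨k, fun x => if hx : 0 < δ x then c ⟨x, hx⟩ else c ⟨v₀, hv₀⟩, fun i => ?_,
    fun u v hu hv => ?_⟩
  · obtain ⟨⟨x, hx⟩, rfl⟩ := hsurj i
    exact ⟨x, hx, dif_pos hx⟩
  · simp only [dif_pos hu, dif_pos hv, ne_eq, hc]
    tauto

end OrientedGraph

/-- Let `D` be a finite oriented graph and `δ` a density function
(a probability distribution maximizing `∑_{(u,v)∈E} δ u * δ v`). Then the subgraph
induced by the support of `δ` is an orientation of a blow-up of `K_k` for some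
`k ≥ 1`: there is a colouring `c` of the vertices such that two support vertices are
joined (in some direction) iff their colours differ, and the total `δ`-mass of each
colour class equals `1/k`. -/
theorem density_function_support_is_blowup
    {V : Type*} [Fintype V] [DecidableEq V]
    (E : V → V → Prop) [DecidableRel E]
    (hirr : ∀ v, ¬ E v v)
    (hanti : ∀ u v, E u v → ¬ E v u)
    (δ : V → ℝ)
    (hnonneg : ∀ v, 0 ≤ δ v) (hsum : (∑ v, δ v) = 1)
    (hmax : ∀ δ' : V → ℝ, (∀ v, 0 ≤ δ' v) → (∑ v, δ' v) = 1 →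
      (∑ u, ∑ v, if E u v then δ' u * δ' v else 0) ≤
      (∑ u, ∑ v, if E u v then δ u * δ v else 0)) :
    ∃ (k : ℕ), 1 ≤ k ∧ ∃ c : V → Fin k,
      (∀ u v, 0 < δ u → 0 < δ v → ((E u v ∨ E v u) ↔ c u ≠ c v)) ∧
      (∀ i : Fin k,
        (∑ v ∈ Finset.univ.filter (fun v => 0 < δ v ∧ c v = i), δ v) = 1 / k) := by
  have hδ : δ ∈ stdSimplex ℝ V := ⟨hnonneg, hsum⟩
  have hmaxOn : IsMaxOn (fun x => x ⬝ᵥ arcMatrix E *ᵥ x) (stdSimplex ℝ V) δ :=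
    isMaxOn_iff.2 fun δ' hδ' => by
      simpa only [sum_sum_ite_eq_dotProduct_arcMatrix_mulVec] using hmax δ' hδ'.1 hδ'.2
  obtain ⟨k, c, hrep, hc⟩ := exists_support_coloring_of_isMaxOn hirr hδ hmaxOn
  obtain ⟨v₀, hv₀⟩ := exists_pos_of_mem_stdSimplex hδ
  set d := (arcMatrix E + (arcMatrix E)ᵀ) *ᵥ δ
  have hmass : ∀ i, ∑ v ∈ univ.filter (fun v => 0 < δ v ∧ c v = i), δ v = 1 - d v₀ := by
    intro i
    obtain ⟨x, hx, rfl⟩ := hrep i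
    have := arcMatrix_add_transpose_mulVec_apply_add_sum_eq_one hanti hδ hc hx
    rw [mulVec_apply_eq_of_isMaxOn hδ hmaxOn hx hv₀] at this
    linarith
  have hk_mass : (k : ℝ) * (1 - d v₀) = 1 := by
    calc (k : ℝ) * (1 - d v₀)
        = ∑ i, ∑ v ∈ univ.filter (fun v => 0 < δ v ∧ c v = i), δ v := by
          rw [sum_congr rfl fun i _ => hmass i, sum_const, card_univ, Fintype.card_fin,
            nsmul_eq_mul]
      _ = ∑ v ∈ univ.filter (fun v => 0 < δ v), δ v := by
          simp only [← filter_filter, sum_fiberwise]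
      _ = 1 := (sum_filter_of_ne fun v _ hv => (hnonneg v).lt_of_ne' hv).trans hsum
  have hk : 0 < k := Fin.pos (c v₀)
  refine ⟨k, hk, c, hc, fun i => ?_⟩
  rw [hmass i, eq_div_iff (by positivity)]
  linarith
end
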